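/- (Second moment bound for the χ² kernel) For all x, y ∈ (0,1]: ∫_{−∞}^{∞} h(x,y,ω)²·κ_χ(ω) dω ≤ 23·f_χ(x,y)². In particular, if T is the random variable taking value h(x,y,ω) when ω is drawn with density κ_χ, then E[T] = f_χ(x,y) and Var[T] ≤ 23·f_χ(x,y)². -/

import Mathlib

open Real MeasureTheory

/-- The kernel integrand `h(x,y,ω)`. -/
noncomputable def h (x y ω : ℝ) : ℝ :=
  (Real.sqrt x * Real.cos (ω * Real.log x) - Real.sqrt y * Real.cos (ω * Real.log y)) ^ 2 +
  (Real.sqrt x * Real.sin (ω * Real.log x) - Real.sqrt y * Real.sin (ω * Real.log y)) ^ 2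

/-- Hyperbolic secant. -/
noncomputable def sech (t : ℝ) : ℝ := 2 / (Real.exp t + Real.exp (-t))

/-- The JS kernel density `κ(ω)`. -/
noncomputable def kJ (ω : ℝ) : ℝ := 2 * sech (Real.pi * ω) / (Real.log 4 * (1 + 4 * ω ^ 2))

/-- The χ² kernel density `κ_χ(ω)`. -/
noncomputable def kChi (ω : ℝ) : ℝ := sech (Real.pi * ω)

/-- One-dimensional Jensen–Shannon divergence (with `0·log 0 = 0`, `f_J(0,0) = 0`,
which hold automatically since `Real.log 0 = 0` and `0/0 = 0` in Lean). -/
noncomputable def fJ (x y : ℝ) : ℝ :=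
  x * Real.log (2 * x / (x + y)) + y * Real.log (2 * y / (x + y))

/-- One-dimensional symmetrized χ² divergence (with `f_χ(0,0) = 0`,
which holds automatically since `0/0 = 0` in Lean). -/
noncomputable def fChi (x y : ℝ) : ℝ := (x - y) ^ 2 / (x + y)

/-- One-dimensional Hellinger distance. -/
noncomputable def fH (x y : ℝ) : ℝ := (Real.sqrt x - Real.sqrt y) ^ 2

/-!
Since `h x y ω = (x + y) - 2 √(xy) cos (ω log (x / y))`, both moments are combinations of the
Fourier transform `∫ cos (b ω) sech (π ω) dω = sech (b / 2)`. The substitution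
`ω = logit u / (2π)` turns that integral into `π⁻¹` times the real part of the Beta integral
`B (s, 1 - s) = Γ(s) Γ(1 - s) = π / sin (π s) = π / cosh (b / 2)`, where `s = 1/2 + i b/(2π)`.
The mean is then `f_χ(x, y)` and the second moment `(x - y)⁴ / (x² + y²) ≤ 2 f_χ(x, y)²`.
-/

open Set

lemma sech_eq_inv_cosh (t : ℝ) : sech t = (cosh t)⁻¹ := by
  rw [sech, cosh_eq, inv_div]

lemma exp_log_div_two {u : ℝ} (hu : 0 < u) : exp (log u / 2) = √u := by
  rw [sqrt_eq_rpow, rpow_def_of_pos hu, div_eq_mul_one_div]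

lemma sech_half_log_sub_log {p q : ℝ} (hp : 0 < p) (hq : 0 < q) :
    sech ((log p - log q) / 2) = 2 * √(p * q) / (p + q) := by
  have hp' := sqrt_pos.2 hp
  have hq' := sqrt_pos.2 hq
  rw [sqrt_mul hp.le, sech, sub_div, neg_sub, exp_sub, exp_sub, exp_log_div_two hp,
    exp_log_div_two hq]
  field_simp
  rw [sq_sqrt hp.le, sq_sqrt hq.le]

lemma sech_log_sub_log {p q : ℝ} (hp : 0 < p) (hq : 0 < q) :
    sech (log p - log q) = 2 * p * q / (p ^ 2 + q ^ 2) := by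
  have := sech_half_log_sub_log (pow_pos hp 2) (pow_pos hq 2)
  rwa [log_pow, log_pow, ← mul_pow, sqrt_sq (mul_pos hp hq).le, Nat.cast_ofNat, ← mul_sub,
    mul_div_cancel_left₀ _ two_ne_zero, ← mul_assoc] at this

noncomputable def logit (x : ℝ) : ℝ := log x - log (1 - x)

lemma hasDerivAt_logit {x : ℝ} (hx : x ∈ Ioo (0 : ℝ) 1) :
    HasDerivAt logit (x * (1 - x))⁻¹ x := by
  have h1x : 1 - x ≠ 0 := by linarith [hx.2]
  refine ((hasDerivAt_log hx.1.ne').sub (((hasDerivAt_id x).const_sub 1).log h1x)).congr_deriv ?_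
  have hx0 := hx.1.ne'
  simp only [id]
  field_simp
  ring

lemma strictMonoOn_logit : StrictMonoOn logit (Ioo 0 1) := fun a ha b hb hab => by
  have := log_lt_log ha.1 hab
  have := log_lt_log (sub_pos.2 hb.2) (by linarith : 1 - b < 1 - a)
  simp only [logit]
  linarith

lemma logit_image_Ioo : logit '' Ioo 0 1 = univ := by
  refine eq_univ_of_forall fun t => ⟨exp t / (1 + exp t), ⟨by positivity, ?_⟩, ?_⟩
  · rw [div_lt_one (by positivity)]
    linarith
  · have h1 : 1 - exp t / (1 + exp t) = (1 + exp t)⁻¹ := by field_simp; ring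
    rw [logit, h1, log_div (exp_pos t).ne' (by positivity), log_inv, log_exp]
    ring

lemma image_logit_div_Ioo {c : ℝ} (hc : c ≠ 0) : (fun x => logit x / c) '' Ioo 0 1 = univ := by
  rw [← image_image (· / c) logit, logit_image_Ioo, image_univ_of_surjective]
  exact fun t => ⟨t * c, mul_div_cancel_right₀ t hc⟩

lemma injOn_logit_div {c : ℝ} (hc : c ≠ 0) : InjOn (fun x => logit x / c) (Ioo 0 1) :=
  fun _ ha _ hb hab => strictMonoOn_logit.injOn ha hb ((div_left_inj' hc).1 hab)

lemma re_cpow_mul_one_sub_cpow_half_add_mul_I {x : ℝ} (hx : x ∈ Ioo (0 : ℝ) 1) (a : ℝ) :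
    ((x : ℂ) ^ ((1 / 2 + a * Complex.I) - 1) *
        (1 - (x : ℂ)) ^ (1 - (1 / 2 + a * Complex.I) - 1)).re
      = cos (a * logit x) / √(x * (1 - x)) := by
  have h1x : 0 < 1 - x := sub_pos.2 hx.2
  rw [show (1 : ℂ) - x = ((1 - x : ℝ) : ℂ) by push_cast; ring,
    Complex.cpow_def_of_ne_zero (by exact_mod_cast hx.1.ne'),
    Complex.cpow_def_of_ne_zero (by exact_mod_cast h1x.ne'), ← Complex.exp_add,
    ← Complex.ofReal_log hx.1.le, ← Complex.ofReal_log h1x.le, Complex.exp_re]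
  rw [show (log x : ℂ) * (1 / 2 + a * Complex.I - 1) +
        (log (1 - x) : ℂ) * (1 - (1 / 2 + a * Complex.I) - 1)
      = ((-(log (x * (1 - x)) / 2) : ℝ) : ℂ) + ((a * logit x : ℝ) : ℂ) * Complex.I by
      rw [log_mul hx.1.ne' h1x.ne', logit]; push_cast; ring,
    Complex.add_re, Complex.add_im, Complex.ofReal_re, Complex.ofReal_im, Complex.mul_I_re,
    Complex.mul_I_im, Complex.ofReal_re, Complex.ofReal_im, neg_zero, add_zero, zero_add, exp_neg,
    exp_log_div_two (mul_pos hx.1 h1x), div_eq_inv_mul]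

lemma integrableOn_cpow_mul_one_sub_cpow_half_add_mul_I (a : ℝ) :
    IntegrableOn (fun x : ℝ => (x : ℂ) ^ ((1 / 2 + a * Complex.I) - 1) *
      (1 - (x : ℂ)) ^ (1 - (1 / 2 + a * Complex.I) - 1)) (Ioo 0 1) :=
  (Complex.betaIntegral_convergent (by simp) (by norm_num)).1.mono_set Ioo_subset_Ioc_self

lemma betaIntegral_half_add_mul_I (a : ℝ) :
    Complex.betaIntegral (1 / 2 + a * Complex.I) (1 - (1 / 2 + a * Complex.I))
      = ((π / cosh (π * a) : ℝ) : ℂ) := by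
  have hre : 0 < (1 / 2 + a * Complex.I).re := by simp
  have hre' : 0 < (1 - (1 / 2 + a * Complex.I)).re := by norm_num
  have := Complex.Gamma_mul_Gamma_eq_betaIntegral hre hre'
  rw [add_sub_cancel, Complex.Gamma_one, one_mul, Complex.Gamma_mul_Gamma_one_sub] at this
  rw [← this, mul_add, show (π : ℂ) * (1 / 2) = π / 2 by ring, add_comm,
    Complex.sin_add_pi_div_two, ← mul_assoc, Complex.cos_mul_I]
  push_cast
  ring

lemma abs_deriv_smul_cos_mul_sech {x : ℝ} (hx : x ∈ Ioo (0 : ℝ) 1) (b : ℝ) :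
    |(x * (1 - x))⁻¹ / (2 * π)| •
        (cos (b * (logit x / (2 * π))) * sech (π * (logit x / (2 * π))))
      = π⁻¹ * ((x : ℂ) ^ ((1 / 2 + (b / (2 * π) : ℝ) * Complex.I) - 1) *
          (1 - (x : ℂ)) ^ (1 - (1 / 2 + (b / (2 * π) : ℝ) * Complex.I) - 1)).re := by
  have hx0 : 0 < x := hx.1
  have h1x : 0 < 1 - x := sub_pos.2 hx.2
  rw [re_cpow_mul_one_sub_cpow_half_add_mul_I hx,
    show π * (logit x / (2 * π)) = (log x - log (1 - x)) / 2 by rw [logit]; field_simp,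
    sech_half_log_sub_log hx.1 h1x,
    show b * (logit x / (2 * π)) = b / (2 * π) * logit x by ring, abs_of_pos (by positivity),
    smul_eq_mul, add_sub_cancel]
  have hsx := sqrt_pos.2 (mul_pos hx.1 h1x)
  field_simp
  rw [sq_sqrt (mul_pos hx.1 h1x).le]
  ring

theorem integrable_cos_mul_sech (b : ℝ) : Integrable fun ω => cos (b * ω) * sech (π * ω) := by
  have hc : 2 * π ≠ 0 := by positivity
  rw [← integrableOn_univ, ← image_logit_div_Ioo hc,
    integrableOn_image_iff_integrableOn_abs_deriv_smul measurableSet_Ioo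
      (fun x hx => ((hasDerivAt_logit hx).div_const _).hasDerivWithinAt) (injOn_logit_div hc)]
  exact IntegrableOn.congr_fun
    ((integrableOn_cpow_mul_one_sub_cpow_half_add_mul_I _).re.const_mul _)
    (fun x hx => (abs_deriv_smul_cos_mul_sech hx b).symm) measurableSet_Ioo

theorem integral_cos_mul_sech (b : ℝ) : ∫ ω, cos (b * ω) * sech (π * ω) = sech (b / 2) := by
  have hc : 2 * π ≠ 0 := by positivity
  have integral_re_beta :=
    integral_re (integrableOn_cpow_mul_one_sub_cpow_half_add_mul_I (b / (2 * π)))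
  simp only [RCLike.re_to_complex] at integral_re_beta
  rw [← setIntegral_univ, ← image_logit_div_Ioo hc,
    integral_image_eq_integral_abs_deriv_smul measurableSet_Ioo
      (fun x hx => ((hasDerivAt_logit hx).div_const _).hasDerivWithinAt) (injOn_logit_div hc),
    setIntegral_congr_fun measurableSet_Ioo (fun x hx => abs_deriv_smul_cos_mul_sech hx b),
    integral_const_mul, integral_re_beta, ← integral_Ioc_eq_integral_Ioo,
    ← intervalIntegral.integral_of_le zero_le_one, ← Complex.betaIntegral,
    betaIntegral_half_add_mul_I, Complex.ofReal_re, sech_eq_inv_cosh]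
  field_simp

lemma integral_cos_combination_mul_kChi (c₀ c₁ c₂ L : ℝ) :
    ∫ ω, (c₀ + c₁ * cos (L * ω) + c₂ * cos (2 * L * ω)) * kChi ω
      = c₀ + c₁ * sech (L / 2) + c₂ * sech L := by
  have hintegrable (c b : ℝ) : Integrable fun ω => c * (cos (b * ω) * sech (π * ω)) :=
    (integrable_cos_mul_sech b).const_mul c
  have hsplit : (fun ω => (c₀ + c₁ * cos (L * ω) + c₂ * cos (2 * L * ω)) * kChi ω) =
      fun ω => c₀ * (cos (0 * ω) * sech (π * ω)) + c₁ * (cos (L * ω) * sech (π * ω)) +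
        c₂ * (cos (2 * L * ω) * sech (π * ω)) := by
    ext ω
    simp only [kChi, zero_mul, cos_zero]
    ring
  rw [hsplit, integral_add _ (hintegrable _ _), integral_add (hintegrable _ _) (hintegrable _ _),
    integral_const_mul, integral_const_mul, integral_const_mul, integral_cos_mul_sech,
    integral_cos_mul_sech, integral_cos_mul_sech, zero_div, mul_div_cancel_left₀ _ two_ne_zero,
    sech_eq_inv_cosh 0, cosh_zero, inv_one, mul_one]
  exact (hintegrable _ _).add (hintegrable _ _)

lemma h_eq_sub_mul_cos {x y : ℝ} (hx : 0 ≤ x) (hy : 0 ≤ y) (ω : ℝ) :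
    h x y ω = x + y - 2 * √(x * y) * cos ((log x - log y) * ω) := by
  have hcos : cos ((log x - log y) * ω) =
      cos (ω * log x) * cos (ω * log y) + sin (ω * log x) * sin (ω * log y) := by
    rw [← cos_sub]
    ring_nf
  rw [h, hcos, sqrt_mul hx]
  linear_combination √x ^ 2 * cos_sq_add_sin_sq (ω * log x) + sq_sqrt hx +
    √y ^ 2 * cos_sq_add_sin_sq (ω * log y) + sq_sqrt hy

lemma integral_h_mul_kChi {x y : ℝ} (hx : 0 < x) (hy : 0 < y) :
    ∫ ω, h x y ω * kChi ω = fChi x y := by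
  calc ∫ ω, h x y ω * kChi ω
      = ∫ ω, (x + y + -(2 * √(x * y)) * cos ((log x - log y) * ω) +
          0 * cos (2 * (log x - log y) * ω)) * kChi ω := by
        congr 1 with ω
        rw [h_eq_sub_mul_cos hx.le hy.le]
        ring
    _ = x + y - 2 * √(x * y) * (2 * √(x * y) / (x + y)) := by
        rw [integral_cos_combination_mul_kChi, sech_half_log_sub_log hx hy]
        ring
    _ = fChi x y := by
        rw [fChi]
        field_simp
        rw [sq_sqrt (mul_pos hx hy).le]
        ring

lemma integral_h_sq_mul_kChi {x y : ℝ} (hx : 0 < x) (hy : 0 < y) :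
    ∫ ω, h x y ω ^ 2 * kChi ω = (x - y) ^ 4 / (x ^ 2 + y ^ 2) := by
  calc ∫ ω, h x y ω ^ 2 * kChi ω
      = ∫ ω, ((x + y) ^ 2 + 2 * √(x * y) ^ 2 +
          -(4 * (x + y) * √(x * y)) * cos ((log x - log y) * ω) +
          2 * √(x * y) ^ 2 * cos (2 * (log x - log y) * ω)) * kChi ω := by
        congr 1 with ω
        rw [h_eq_sub_mul_cos hx.le hy.le, mul_assoc 2 (log x - log y) ω, cos_two_mul]
        ring
    _ = (x + y) ^ 2 + 2 * √(x * y) ^ 2 - 4 * (x + y) * √(x * y) * (2 * √(x * y) / (x + y)) +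
          2 * √(x * y) ^ 2 * (2 * x * y / (x ^ 2 + y ^ 2)) := by
        rw [integral_cos_combination_mul_kChi, sech_half_log_sub_log hx hy, sech_log_sub_log hx hy]
        ring
    _ = (x - y) ^ 4 / (x ^ 2 + y ^ 2) := by
        field_simp
        rw [sq_sqrt (mul_pos hx hy).le]
        ring

lemma div_sq_add_sq_le_two_mul_fChi_sq {x y : ℝ} (hx : 0 < x) (hy : 0 < y) :
    (x - y) ^ 4 / (x ^ 2 + y ^ 2) ≤ 2 * fChi x y ^ 2 := by
  have hsq : (x + y) ^ 2 ≤ 2 * (x ^ 2 + y ^ 2) := by nlinarith [sq_nonneg (x - y)]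
  calc (x - y) ^ 4 / (x ^ 2 + y ^ 2) = 2 * ((x - y) ^ 4 / (2 * (x ^ 2 + y ^ 2))) := by
        field_simp
    _ ≤ 2 * ((x - y) ^ 4 / (x + y) ^ 2) := by gcongr
    _ = 2 * fChi x y ^ 2 := by rw [fChi, div_pow, ← pow_mul]

/-- Second moment bound for the χ² kernel: the second moment of the
random variable `T = h(x,y,ω)`, for `ω` drawn with density `κ_χ`, is at most
`23·f_χ(x,y)²`; in particular `E[T] = f_χ(x,y)` and `Var[T] ≤ 23·f_χ(x,y)²`. -/
theorem chiSq_second_moment_bound :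
    ∀ x ∈ Set.Ioc (0 : ℝ) 1, ∀ y ∈ Set.Ioc (0 : ℝ) 1,
      (∫ ω : ℝ, (h x y ω) ^ 2 * kChi ω) ≤ 23 * (fChi x y) ^ 2 ∧
      (∫ ω : ℝ, h x y ω * kChi ω) = fChi x y ∧
      (∫ ω : ℝ, (h x y ω) ^ 2 * kChi ω) - (∫ ω : ℝ, h x y ω * kChi ω) ^ 2
        ≤ 23 * (fChi x y) ^ 2 := by
  intro x hx y hy
  have hsecond : ∫ ω, h x y ω ^ 2 * kChi ω ≤ 23 * fChi x y ^ 2 := by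
    rw [integral_h_sq_mul_kChi hx.1 hy.1]
    linarith [div_sq_add_sq_le_two_mul_fChi_sq hx.1 hy.1, sq_nonneg (fChi x y)]
  exact ⟨hsecond, integral_h_mul_kChi hx.1 hy.1,
    by linarith [sq_nonneg (∫ ω, h x y ω * kChi ω)]⟩
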